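/- Assume T is binary and let k be a positive integer. Define tables over extended reals, for u ∈ V, 0 ≤ κ ≤ k, and v ∈ anc(u) ∪ {ε}: A(u, 0, v) = 0; if u is a leaf, A⁰(u, κ, v) = 0 and A¹(u, κ, v) = −∞ for κ ≥ 1; if u is internal and κ ≥ 1, A¹(u, κ, v) = E[I(u|{v})]·U(u) + max over κ_ℓ + κ_r = κ − 1 of (A(ℓ(u), κ_ℓ, u) + A(r(u), κ_r, u)) and A⁰(u, κ, v) = max over κ_ℓ + κ_r = κ of (A(ℓ(u), κ_ℓ, v) + A(r(u), κ_r, v)); and A(u, κ, v) = max{A¹(u, κ, v), A⁰(u, κ, v)} for κ ≥ 1, where E[I(u|{ε})] := E[I(u|∅)]. Then A(r, k, ε) equals the maximum of B(R) over all sets R ⊆ V containing no leaf of T with |R| ≤ k; i.e., the dynamic program computes the optimal benefit. -/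

import Mathlib

open scoped Classical

section TreeDefs

variable {V : Type*}

/-- The set of strict ancestors of `u` in the rooted tree given by `parent`. -/
def ancSet (parent : V → V) (u : V) : Set V :=
  {v | v ≠ u ∧ ∃ n : ℕ, parent^[n] u = v}

/-- The set of nodes of the subtree rooted at `u` (including `u`). -/
def subtreeSet (parent : V → V) (u : V) : Set V :=
  {x | ∃ n : ℕ, parent^[n] x = u}

/-- The set of nodes strictly between `u` and its ancestor `v`. -/
def pathSet (parent : V → V) (u v : V) : Set V :=
  {w | w ∈ ancSet parent u ∧ v ∈ ancSet parent w}

/-- A node is internal if it has at least one child. -/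
def isInternal (parent : V → V) (u : V) : Prop :=
  ∃ w, w ≠ u ∧ parent w = u

/-- `T` is binary with left-child map `lc` and right-child map `rc`. -/
def isBinary (parent lc rc : V → V) : Prop :=
  ∀ u, isInternal parent u →
    lc u ≠ rc u ∧ parent (lc u) = u ∧ parent (rc u) = u ∧
    lc u ≠ u ∧ rc u ≠ u ∧
    ∀ w, w ≠ u → parent w = u → w = lc u ∨ w = rc u

/-- The usefulness indicator `I_q(u|R)` of node `u` for a query with
summed-out variables `Zq`, with respect to the materialized set `R`. -/
noncomputable def useful {α : Type*} (parent : V → V) (vars : V → Set α)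
    (Zq : Set α) (u : V) (R : Set V) : ℝ :=
  if vars u ⊆ Zq ∧ ∀ v ∈ ancSet parent u ∩ R, ¬ vars v ⊆ Zq then 1 else 0

/-- The expected usefulness `E[I(u|R)]` over the query distribution. -/
noncomputable def eInd {α Q : Type*} [Fintype Q] (parent : V → V) (vars : V → Set α)
    (Z : Q → Set α) (Pr : Q → ℝ) (u : V) (R : Set V) : ℝ :=
  ∑ q : Q, Pr q * useful parent vars (Z q) u R

/-- The utility `U(u) = Σ_{x ∈ subtree(u)} c(x)`. -/
noncomputable def util [Fintype V] (parent : V → V) (c : V → ℝ) (u : V) : ℝ :=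
  ∑ x ∈ Finset.univ.filter (fun x => x ∈ subtreeSet parent u), c x

/-- The benefit `B(R) = Σ_{u ∈ R} E[I(u|R)] · U(u)`. -/
noncomputable def benefit [Fintype V] {α Q : Type*} [Fintype Q]
    (parent : V → V) (vars : V → Set α) (Z : Q → Set α) (Pr : Q → ℝ)
    (c : V → ℝ) (R : Finset V) : ℝ :=
  ∑ u ∈ R, eInd parent vars Z Pr u (↑R) * util parent c u

/-- The partial benefit `pB_u(R) = Σ_{w ∈ R ∩ subtree(u)} E[I(w|R)] · U(w)`. -/
noncomputable def pB [Fintype V] {α Q : Type*} [Fintype Q]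
    (parent : V → V) (vars : V → Set α) (Z : Q → Set α) (Pr : Q → ℝ)
    (c : V → ℝ) (u : V) (R : Finset V) : ℝ :=
  ∑ w ∈ R.filter (fun w => w ∈ subtreeSet parent u),
    eInd parent vars Z Pr w (↑R) * util parent c w

end TreeDefs

/-- The set `{v}` for `vo = some v`, and `∅` for `vo = ε = none`. -/
def optSet {V : Type*} (vo : Option V) : Set V := vo.elim ∅ (fun v => {v})

/-!
The entry `A(u, κ, v)` is the best benefit of a leaf-free set of at most `κ` nodes of the subtree
of `u`, where usefulness is computed as if `v` (the nearest selected strict ancestor of `u`, none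
for `ε`) were selected as well; this is proved by induction over the tree. Two facts make the
recursion exact. Strict ancestors of a node below one child of `u` never lie below the other
child, so the benefits of the two halves of a selection add up. And once `u` is selected, `v`
no longer matters below `u`: whenever `vars v ⊆ Z_q`, also `vars u ⊆ vars v ⊆ Z_q`, so `u`
already blocks. The maxima over the splits `κℓ + κr` are attained, there being finitely many.
-/

section SubtreeOrder

variable {V : Type*} {parent : V → V} {u v w x : V}

theorem mem_subtreeSet_self (u : V) : u ∈ subtreeSet parent u := ⟨0, rfl⟩

theorem mem_subtreeSet_of_parent_eq (h : parent x = u) : x ∈ subtreeSet parent u :=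
  ⟨1, h⟩

theorem mem_subtreeSet_trans (hw : w ∈ subtreeSet parent x) (hx : x ∈ subtreeSet parent u) :
    w ∈ subtreeSet parent u := by
  obtain ⟨a, rfl⟩ := hw
  obtain ⟨b, rfl⟩ := hx
  exact ⟨b + a, Function.iterate_add_apply _ _ _ _⟩

theorem subtreeSet_subset_of_parent_eq (h : parent x = u) :
    subtreeSet parent x ⊆ subtreeSet parent u :=
  fun _ hw => mem_subtreeSet_trans hw (mem_subtreeSet_of_parent_eq h)

/-- `w ∈ subtreeSet parent v` says that `v` is `w` or one of its ancestors (and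
`v ∈ ancSet parent w` unfolds to `v ≠ w ∧ w ∈ subtreeSet parent v`), so this says that the
ancestors of `w` form a chain. -/
theorem mem_subtreeSet_total (hx : w ∈ subtreeSet parent x) (hv : w ∈ subtreeSet parent v) :
    v ∈ subtreeSet parent x ∨ x ∈ subtreeSet parent v := by
  obtain ⟨a, rfl⟩ := hx
  obtain ⟨b, rfl⟩ := hv
  rcases le_total b a with h | h
  · refine Or.inl ⟨a - b, ?_⟩
    rw [← Function.iterate_add_apply, Nat.sub_add_cancel h]
  · refine Or.inr ⟨b - a, ?_⟩
    rw [← Function.iterate_add_apply, Nat.sub_add_cancel h]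

theorem parent_mem_subtreeSet (hx : x ∈ subtreeSet parent u) (hxu : x ≠ u) :
    parent x ∈ subtreeSet parent u := by
  obtain ⟨_ | n, hn⟩ := hx
  · exact absurd hn hxu
  · exact ⟨n, hn⟩

theorem exists_child_of_mem_subtreeSet (hx : x ∈ subtreeSet parent u) (hxu : x ≠ u) :
    ∃ y, y ≠ u ∧ parent y = u ∧ x ∈ subtreeSet parent y := by
  obtain ⟨n, hn⟩ := hx
  induction n generalizing x with
  | zero => exact absurd hn hxu
  | succ n ih =>
    rw [Function.iterate_succ_apply] at hn
    by_cases hpx : parent x = u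
    · exact ⟨x, hxu, hpx, mem_subtreeSet_self x⟩
    · obtain ⟨y, hyu, hy, hxy⟩ := ih hpx hn
      exact ⟨y, hyu, hy, mem_subtreeSet_trans (mem_subtreeSet_of_parent_eq rfl) hxy⟩

theorem eq_of_mem_subtreeSet_of_not_isInternal (hu : ¬ isInternal parent u)
    (hx : x ∈ subtreeSet parent u) : x = u := by
  by_contra hxu
  obtain ⟨y, hyu, hy, -⟩ := exists_child_of_mem_subtreeSet hx hxu
  exact hu ⟨y, hyu, hy⟩

theorem eq_or_mem_subtreeSet_lc_or_rc {lc rc : V → V} (hbin : isBinary parent lc rc)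
    (hu : isInternal parent u) (hx : x ∈ subtreeSet parent u) :
    x = u ∨ x ∈ subtreeSet parent (lc u) ∨ x ∈ subtreeSet parent (rc u) := by
  by_cases hxu : x = u
  · exact Or.inl hxu
  obtain ⟨y, hyu, hy, hxy⟩ := exists_child_of_mem_subtreeSet hx hxu
  rcases (hbin u hu).2.2.2.2.2 y hyu hy with rfl | rfl
  exacts [Or.inr (Or.inl hxy), Or.inr (Or.inr hxy)]

end SubtreeOrder

structure IsRootedTree {V : Type*} (parent : V → V) (root : V) : Prop where
  parent_root : parent root = root
  reach : ∀ u, ∃ n : ℕ, parent^[n] u = root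

namespace IsRootedTree

variable {V : Type*} {parent : V → V} {root : V} {u v w x y : V}

theorem eq_root_of_iterate_eq_self (hT : IsRootedTree parent root) {n : ℕ} (hn : 0 < n)
    (h : parent^[n] u = u) : u = root := by
  obtain ⟨m, hm⟩ := hT.reach u
  have hcyc : parent^[n * m] u = u := Function.IsPeriodicPt.mul_const h m
  rw [← Nat.sub_add_cancel (Nat.le_mul_of_pos_left m hn), Function.iterate_add_apply, hm,
    Function.iterate_fixed hT.parent_root] at hcyc
  exact hcyc.symm

theorem not_mem_subtreeSet_child (hT : IsRootedTree parent root) (hx : parent x = u)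
    (hxu : x ≠ u) : u ∉ subtreeSet parent x := by
  rintro ⟨n, hn⟩
  have hu : u = root := hT.eq_root_of_iterate_eq_self n.succ_pos
    (by rw [Function.iterate_succ_apply', hn, hx])
  subst hu
  exact hxu (by rw [← hn, Function.iterate_fixed hT.parent_root])

theorem subtreeSet_ssubset_child (hT : IsRootedTree parent root) (hx : parent x = u)
    (hxu : x ≠ u) : subtreeSet parent x ⊂ subtreeSet parent u :=
  Set.ssubset_iff_exists.mpr ⟨subtreeSet_subset_of_parent_eq hx, u, mem_subtreeSet_self u,
    hT.not_mem_subtreeSet_child hx hxu⟩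

theorem induction [Finite V] (hT : IsRootedTree parent root) {P : V → Prop}
    (h : ∀ u, (∀ x, parent x = u → x ≠ u → P x) → P u) (u : V) : P u := by
  induction hn : (subtreeSet parent u).ncard using Nat.strong_induction_on generalizing u with
  | _ n ih =>
    exact h u fun x hx hxu =>
      ih _ (hn ▸ Set.ncard_lt_ncard (hT.subtreeSet_ssubset_child hx hxu)) x rfl

theorem disjoint_subtreeSet_siblings (hT : IsRootedTree parent root) (hx : parent x = u)
    (hxu : x ≠ u) (hy : parent y = u) (hyu : y ≠ u) (hxy : x ≠ y) :
    Disjoint (subtreeSet parent x) (subtreeSet parent y) := by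
  refine Set.disjoint_left.mpr fun z hzx hzy => ?_
  rcases mem_subtreeSet_total hzx hzy with hyx | hxy'
  · exact hT.not_mem_subtreeSet_child hx hxu (hy ▸ parent_mem_subtreeSet hyx (Ne.symm hxy))
  · exact hT.not_mem_subtreeSet_child hy hyu (hx ▸ parent_mem_subtreeSet hxy' hxy)

theorem disjoint_ancSet_subtreeSet_sibling (hT : IsRootedTree parent root) (hx : parent x = u)
    (hxu : x ≠ u) (hy : parent y = u) (hyu : y ≠ u) (hxy : x ≠ y)
    (hw : w ∈ subtreeSet parent x) : Disjoint (ancSet parent w) (subtreeSet parent y) := by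
  refine Set.disjoint_left.mpr fun v hv hvy => ?_
  have hdisj := Set.disjoint_left.mp (hT.disjoint_subtreeSet_siblings hx hxu hy hyu hxy)
  rcases mem_subtreeSet_total hw hv.2 with hvx | hxv
  · exact hdisj hvx hvy
  · exact hdisj (mem_subtreeSet_self x) (mem_subtreeSet_trans hxv hvy)

theorem disjoint_ancSet_subtreeSet_child (hT : IsRootedTree parent root) (hx : parent x = u)
    (hxu : x ≠ u) : Disjoint (ancSet parent u) (subtreeSet parent x) :=
  Set.disjoint_left.mpr fun _ hv hvx =>
    hT.not_mem_subtreeSet_child hx hxu (mem_subtreeSet_trans hv.2 hvx)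

theorem mem_ancSet_of_mem_subtreeSet_child (hT : IsRootedTree parent root) (hx : parent x = u)
    (hxu : x ≠ u) (hw : w ∈ subtreeSet parent x) : u ∈ ancSet parent w :=
  ⟨fun huw => hT.not_mem_subtreeSet_child hx hxu (huw ▸ hw),
    mem_subtreeSet_trans hw (mem_subtreeSet_of_parent_eq hx)⟩

theorem ancSet_subset_ancSet_child (hT : IsRootedTree parent root) (hx : parent x = u)
    (hxu : x ≠ u) : ancSet parent u ⊆ ancSet parent x := fun _ hv =>
  ⟨fun hvx => hT.not_mem_subtreeSet_child hx hxu (hvx ▸ hv.2),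
    mem_subtreeSet_trans (mem_subtreeSet_of_parent_eq hx) hv.2⟩

theorem erase_eq_filter_union_filter [DecidableEq V] (hT : IsRootedTree parent root)
    {lc rc : V → V} (hbin : isBinary parent lc rc) (hu : isInternal parent u) {R : Finset V}
    (hR : ↑R ⊆ subtreeSet parent u) :
    R.erase u = R.filter (· ∈ subtreeSet parent (lc u)) ∪
      R.filter (· ∈ subtreeSet parent (rc u)) := by
  obtain ⟨-, hl, hr, hlu, hru, -⟩ := hbin u hu
  ext w
  simp only [Finset.mem_erase, Finset.mem_union, Finset.mem_filter]
  constructor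
  · rintro ⟨hwu, hw⟩
    rcases eq_or_mem_subtreeSet_lc_or_rc hbin hu (hR hw) with h | h | h
    exacts [absurd h hwu, Or.inl ⟨hw, h⟩, Or.inr ⟨hw, h⟩]
  · rintro (⟨hw, h⟩ | ⟨hw, h⟩)
    · exact ⟨fun hwu => hT.not_mem_subtreeSet_child hl hlu (hwu ▸ h), hw⟩
    · exact ⟨fun hwu => hT.not_mem_subtreeSet_child hr hru (hwu ▸ h), hw⟩

end IsRootedTree

section Benefit

variable {V α Q : Type*} [Fintype Q] {parent : V → V} {vars : V → Set α} {Z : Q → Set α}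
  {Pr : Q → ℝ} {u w : V}

theorem eInd_union_of_disjoint {S T : Set V} (h : Disjoint (ancSet parent w) T) :
    eInd parent vars Z Pr w (T ∪ S) = eInd parent vars Z Pr w S := by
  simp only [eInd, useful, Set.inter_union_distrib_left, h.inter_eq, Set.empty_union]

theorem eInd_union_of_dominated {S T : Set V} (hu : u ∈ ancSet parent w ∩ S)
    (hdom : ∀ v ∈ T, vars u ⊆ vars v) :
    eInd parent vars Z Pr w (T ∪ S) = eInd parent vars Z Pr w S := by
  have hblock : ∀ Zq : Set α, (∀ v ∈ ancSet parent w ∩ (T ∪ S), ¬ vars v ⊆ Zq) ↔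
      ∀ v ∈ ancSet parent w ∩ S, ¬ vars v ⊆ Zq := by
    refine fun Zq =>
      ⟨fun h v hv => h v ⟨hv.1, Or.inr hv.2⟩, fun h v ⟨hvw, hv⟩ hvZ => ?_⟩
    rcases hv with hv | hv
    · exact h u hu ((hdom v hv).trans hvZ)
    · exact h v ⟨hvw, hv⟩ hvZ
  simp only [eInd, useful, hblock]

noncomputable def condBenefit [Fintype V] (parent : V → V) (vars : V → Set α)
    (Z : Q → Set α) (Pr : Q → ℝ) (c : V → ℝ) (S : Set V) (R : Finset V) : ℝ :=
  ∑ w ∈ R, eInd parent vars Z Pr w (↑R ∪ S) * util parent c w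

variable [Fintype V] {c : V → ℝ}

theorem condBenefit_empty_context (R : Finset V) :
    condBenefit parent vars Z Pr c ∅ R = benefit parent vars Z Pr c R := by
  simp only [condBenefit, benefit, Set.union_empty]

theorem condBenefit_empty (S : Set V) : condBenefit parent vars Z Pr c S ∅ = 0 :=
  Finset.sum_empty

theorem condBenefit_insert_context {S : Set V} {R : Finset V}
    (hS : ∀ v ∈ S, vars u ⊆ vars v) (hR : ∀ w ∈ R, u ∈ ancSet parent w) :
    condBenefit parent vars Z Pr c (insert u S) R =
      condBenefit parent vars Z Pr c {u} R := by
  refine Finset.sum_congr rfl fun w hw => ?_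
  have hsets : (↑R ∪ insert u S : Set V) = S ∪ (↑R ∪ {u}) := by
    ext v
    simp only [Set.mem_union, Set.mem_insert_iff, Set.mem_singleton_iff]
    tauto
  rw [hsets, eInd_union_of_dominated ⟨hR w hw, Or.inr rfl⟩ hS]

variable [DecidableEq V]

theorem condBenefit_insert {S : Set V} {R : Finset V} (hu : u ∉ R) :
    condBenefit parent vars Z Pr c S (insert u R) =
      eInd parent vars Z Pr u (↑(insert u R) ∪ S) * util parent c u +
        condBenefit parent vars Z Pr c (insert u S) R := by
  rw [condBenefit, Finset.sum_insert hu, condBenefit]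
  congr 2 with w
  rw [Finset.coe_insert, Set.insert_union, Set.union_insert]

theorem condBenefit_union {S : Set V} {R R' : Finset V} (hRR' : Disjoint R R')
    (hR : ∀ w ∈ R, Disjoint (ancSet parent w) R')
    (hR' : ∀ w ∈ R', Disjoint (ancSet parent w) R) :
    condBenefit parent vars Z Pr c S (R ∪ R') =
      condBenefit parent vars Z Pr c S R +
        condBenefit parent vars Z Pr c S R' := by
  rw [condBenefit, Finset.sum_union hRR', condBenefit, condBenefit]
  congr 1
  · refine Finset.sum_congr rfl fun w hw => ?_
    rw [Finset.coe_union, Set.union_comm (R : Set V), Set.union_assoc,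
      eInd_union_of_disjoint (hR w hw)]
  · refine Finset.sum_congr rfl fun w hw => ?_
    rw [Finset.coe_union, Set.union_assoc, eInd_union_of_disjoint (hR' w hw)]

end Benefit

section Node

variable {V α Q : Type*} [Fintype V] [DecidableEq V] [Fintype Q] {parent : V → V} {root : V}
  {vars : V → Set α} {Z : Q → Set α} {Pr : Q → ℝ} {c : V → ℝ} {u x y : V}

theorem condBenefit_union_siblings (hT : IsRootedTree parent root) (hx : parent x = u)
    (hxu : x ≠ u) (hy : parent y = u) (hyu : y ≠ u) (hxy : x ≠ y) {S : Set V}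
    {Rx Ry : Finset V} (hRx : ↑Rx ⊆ subtreeSet parent x) (hRy : ↑Ry ⊆ subtreeSet parent y) :
    condBenefit parent vars Z Pr c S (Rx ∪ Ry) =
      condBenefit parent vars Z Pr c S Rx +
        condBenefit parent vars Z Pr c S Ry :=
  condBenefit_union
    (Finset.disjoint_coe.mp ((hT.disjoint_subtreeSet_siblings hx hxu hy hyu hxy).mono hRx hRy))
    (fun _ hw => (hT.disjoint_ancSet_subtreeSet_sibling hx hxu hy hyu hxy (hRx hw)).mono_right hRy)
    (fun _ hw =>
      (hT.disjoint_ancSet_subtreeSet_sibling hy hyu hx hxu hxy.symm (hRy hw)).mono_right hRx)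

theorem condBenefit_insert_union_children (hT : IsRootedTree parent root)
    (hvars : ∀ u v : V, v ∈ ancSet parent u → vars u ⊆ vars v) (hx : parent x = u)
    (hxu : x ≠ u) (hy : parent y = u) (hyu : y ≠ u) (hxy : x ≠ y) {S : Set V}
    (hS : ∀ v ∈ S, v ∈ ancSet parent u) {Rx Ry : Finset V}
    (hRx : ↑Rx ⊆ subtreeSet parent x) (hRy : ↑Ry ⊆ subtreeSet parent y) :
    condBenefit parent vars Z Pr c S (insert u (Rx ∪ Ry)) =
      eInd parent vars Z Pr u S * util parent c u +
        condBenefit parent vars Z Pr c {u} Rx +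
        condBenefit parent vars Z Pr c {u} Ry := by
  have hxanc := hT.disjoint_ancSet_subtreeSet_child hx hxu
  have hyanc := hT.disjoint_ancSet_subtreeSet_child hy hyu
  have hu : u ∉ Rx ∪ Ry := by
    rw [← Finset.mem_coe, Finset.coe_union]
    exact fun h => h.elim (hT.not_mem_subtreeSet_child hx hxu <| hRx ·)
      (hT.not_mem_subtreeSet_child hy hyu <| hRy ·)
  have hdisj : Disjoint (ancSet parent u) ↑(insert u (Rx ∪ Ry)) := by
    rw [Finset.coe_insert, Finset.coe_union, Set.disjoint_insert_right, Set.disjoint_union_right]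
    exact ⟨fun h => h.1 rfl, hxanc.mono_right hRx, hyanc.mono_right hRy⟩
  have hSu : ∀ v ∈ S, vars u ⊆ vars v := fun v hv => hvars u v (hS v hv)
  rw [condBenefit_insert hu, eInd_union_of_disjoint hdisj,
    condBenefit_union_siblings hT hx hxu hy hyu hxy hRx hRy,
    condBenefit_insert_context hSu
      fun _ hw => hT.mem_ancSet_of_mem_subtreeSet_child hx hxu (hRx hw),
    condBenefit_insert_context hSu
      fun _ hw => hT.mem_ancSet_of_mem_subtreeSet_child hy hyu (hRy hw),
    add_assoc]

end Node

section SplitSum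

open scoped Pointwise

variable {β : Type*} [CompleteLinearOrder β] [AddCommMonoid β] [IsOrderedAddMonoid β]

def splitSum (s t : ℕ → Set β) (n : ℕ) : Set β :=
  {x | ∃ i j, i + j = n ∧ x ∈ s i + t j}

theorem isGreatest_splitSum {s t : ℕ → Set β} {f g : ℕ → β}
    (hs : ∀ i, IsGreatest (s i) (f i)) (ht : ∀ j, IsGreatest (t j) (g j)) (n : ℕ) :
    IsGreatest (splitSum s t n) (sSup {x | ∃ i j, i + j = n ∧ x = f i + g j}) := by
  set sums := {x | ∃ i j, i + j = n ∧ x = f i + g j}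
  have hfin : sums.Finite :=
    ((Finset.HasAntidiagonal.antidiagonal n).finite_toSet.image fun p => f p.1 + g p.2).subset <| by
      rintro _ ⟨i, j, hij, rfl⟩
      exact ⟨(i, j), Finset.HasAntidiagonal.mem_antidiagonal.mpr hij, rfl⟩
  obtain ⟨i, j, hij, hmax⟩ :=
    Set.Nonempty.csSup_mem (s := sums) ⟨_, 0, n, zero_add n, rfl⟩ hfin
  refine ⟨⟨i, j, hij, hmax ▸ Set.add_mem_add (hs i).1 (ht j).1⟩, ?_⟩
  rintro _ ⟨i', j', hij', a, ha, b, hb, rfl⟩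
  exact (add_le_add ((hs i').2 ha) ((ht j').2 hb)).trans (le_sSup ⟨i', j', hij', rfl⟩)

end SplitSum


section SubtreeBenefits

variable {V α Q : Type*} [Fintype V] [Fintype Q] {parent : V → V} {vars : V → Set α}
  {Z : Q → Set α} {Pr : Q → ℝ} {c : V → ℝ}

def subtreeBenefits (parent : V → V) (vars : V → Set α) (Z : Q → Set α) (Pr : Q → ℝ)
    (c : V → ℝ) (u : V) (κ : ℕ) (S : Set V) : Set EReal :=
  {x | ∃ R : Finset V, (∀ w ∈ R, isInternal parent w) ∧ ↑R ⊆ subtreeSet parent u ∧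
    R.card ≤ κ ∧ x = condBenefit parent vars Z Pr c S R}

theorem subtreeBenefits_eq_singleton_zero {u : V} {κ : ℕ} {S : Set V}
    (h : ∀ R : Finset V, (∀ w ∈ R, isInternal parent w) → ↑R ⊆ subtreeSet parent u →
      R.card ≤ κ → R = ∅) :
    subtreeBenefits parent vars Z Pr c u κ S = {0} := by
  refine Set.eq_singleton_iff_unique_mem.mpr ⟨⟨∅, by simp, by simp, by simp, ?_⟩, ?_⟩
  · rw [condBenefit_empty, EReal.coe_zero]
  · rintro _ ⟨R, hRint, hRsub, hRcard, rfl⟩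
    rw [h R hRint hRsub hRcard, condBenefit_empty, EReal.coe_zero]

theorem subtreeBenefits_zero (u : V) (S : Set V) : subtreeBenefits parent vars Z Pr c u 0 S = {0} :=
  subtreeBenefits_eq_singleton_zero fun _ _ _ hR => Finset.card_eq_zero.mp (Nat.le_zero.mp hR)

theorem subtreeBenefits_of_not_isInternal {u : V} (hu : ¬ isInternal parent u) (κ : ℕ)
    (S : Set V) : subtreeBenefits parent vars Z Pr c u κ S = {0} :=
  subtreeBenefits_eq_singleton_zero fun _ hRint hRsub _ =>
    Finset.eq_empty_of_forall_notMem fun w hw =>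
      hu (eq_of_mem_subtreeSet_of_not_isInternal hu (hRsub hw) ▸ hRint w hw)

variable [DecidableEq V] {root : V} {lc rc : V → V} {u : V} {κ : ℕ} {S : Set V}

theorem subtreeBenefits_subset_splitSum (hT : IsRootedTree parent root)
    (hvars : ∀ u v : V, v ∈ ancSet parent u → vars u ⊆ vars v)
    (hbin : isBinary parent lc rc)
    (hu : isInternal parent u) (hS : ∀ v ∈ S, v ∈ ancSet parent u) :
    subtreeBenefits parent vars Z Pr c u κ S ⊆
      (fun x => ((eInd parent vars Z Pr u S * util parent c u : ℝ) : EReal) + x) ''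
        splitSum (subtreeBenefits parent vars Z Pr c (lc u) · {u})
          (subtreeBenefits parent vars Z Pr c (rc u) · {u}) (κ - 1) ∪
      splitSum (subtreeBenefits parent vars Z Pr c (lc u) · S)
        (subtreeBenefits parent vars Z Pr c (rc u) · S) κ := by
  obtain ⟨hlr, hl, hr, hlu, hru, -⟩ := hbin u hu
  rintro _ ⟨R, hRint, hRsub, hRcard, rfl⟩
  set Rl := R.filter (· ∈ subtreeSet parent (lc u))
  set Rr := R.filter (· ∈ subtreeSet parent (rc u))
  have hRl : ↑Rl ⊆ subtreeSet parent (lc u) := fun _ hw => (Finset.mem_filter.mp hw).2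
  have hRr : ↑Rr ⊆ subtreeSet parent (rc u) := fun _ hw => (Finset.mem_filter.mp hw).2
  have hRlint : ∀ w ∈ Rl, isInternal parent w := fun w hw => hRint w (Finset.mem_filter.mp hw).1
  have hRrint : ∀ w ∈ Rr, isInternal parent w := fun w hw => hRint w (Finset.mem_filter.mp hw).1
  have hsplit : R.erase u = Rl ∪ Rr := hT.erase_eq_filter_union_filter hbin hu hRsub
  have hcard : (R.erase u).card = Rl.card + Rr.card := by
    rw [hsplit, Finset.card_union_of_disjoint (Finset.disjoint_coe.mp
      ((hT.disjoint_subtreeSet_siblings hl hlu hr hru hlr).mono hRl hRr))]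
  by_cases huR : u ∈ R
  · have hRcard' := Finset.card_erase_of_mem huR
    refine Or.inl ⟨_, ⟨Rl.card, κ - 1 - Rl.card, by omega, _,
      ⟨Rl, hRlint, hRl, le_rfl, rfl⟩, _, ⟨Rr, hRrint, hRr, by omega, rfl⟩, rfl⟩, ?_⟩
    rw [← Finset.insert_erase huR, hsplit,
      condBenefit_insert_union_children hT hvars hl hlu hr hru hlr hS hRl hRr]
    simp only [EReal.coe_add, add_assoc]
  · rw [Finset.erase_eq_of_notMem huR] at hsplit hcard
    refine Or.inr ⟨Rl.card, κ - Rl.card, by omega, _, ⟨Rl, hRlint, hRl, le_rfl, rfl⟩,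
      _, ⟨Rr, hRrint, hRr, by omega, rfl⟩, ?_⟩
    rw [hsplit, condBenefit_union_siblings hT hl hlu hr hru hlr hRl hRr]
    exact (EReal.coe_add _ _).symm

theorem splitSum_subset_subtreeBenefits (hT : IsRootedTree parent root)
    (hvars : ∀ u v : V, v ∈ ancSet parent u → vars u ⊆ vars v)
    (hbin : isBinary parent lc rc)
    (hu : isInternal parent u) (hκ : 1 ≤ κ) (hS : ∀ v ∈ S, v ∈ ancSet parent u) :
    (fun x => ((eInd parent vars Z Pr u S * util parent c u : ℝ) : EReal) + x) ''
        splitSum (subtreeBenefits parent vars Z Pr c (lc u) · {u})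
          (subtreeBenefits parent vars Z Pr c (rc u) · {u}) (κ - 1) ∪
      splitSum (subtreeBenefits parent vars Z Pr c (lc u) · S)
        (subtreeBenefits parent vars Z Pr c (rc u) · S) κ ⊆
    subtreeBenefits parent vars Z Pr c u κ S := by
  obtain ⟨hlr, hl, hr, hlu, hru, -⟩ := hbin u hu
  have hsub {R R' : Finset V} (hR : ↑R ⊆ subtreeSet parent (lc u))
      (hR' : ↑R' ⊆ subtreeSet parent (rc u)) : ↑(R ∪ R') ⊆ subtreeSet parent u := by
    rw [Finset.coe_union]
    exact Set.union_subset (hR.trans (subtreeSet_subset_of_parent_eq hl))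
      (hR'.trans (subtreeSet_subset_of_parent_eq hr))
  have hint {R R' : Finset V} (hR : ∀ w ∈ R, isInternal parent w)
      (hR' : ∀ w ∈ R', isInternal parent w) : ∀ w ∈ R ∪ R', isInternal parent w :=
    fun w hw => (Finset.mem_union.mp hw).elim (hR w) (hR' w)
  rintro _ (⟨_, ⟨i, j, hij, _, ⟨Rl, hlint, hlsub, hlcard, rfl⟩, _,
      ⟨Rr, hrint, hrsub, hrcard, rfl⟩, rfl⟩, rfl⟩ |
    ⟨i, j, hij, _, ⟨Rl, hlint, hlsub, hlcard, rfl⟩, _,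
      ⟨Rr, hrint, hrsub, hrcard, rfl⟩, rfl⟩)
  · refine ⟨insert u (Rl ∪ Rr),
      Finset.forall_mem_insert _ _ _ |>.mpr ⟨hu, hint hlint hrint⟩, ?_, ?_, ?_⟩
    · rw [Finset.coe_insert]
      exact Set.insert_subset (mem_subtreeSet_self u) (hsub hlsub hrsub)
    · have := Finset.card_union_le Rl Rr
      have := Finset.card_insert_le u (Rl ∪ Rr)
      omega
    · rw [condBenefit_insert_union_children hT hvars hl hlu hr hru hlr hS hlsub hrsub]
      simp only [EReal.coe_add, add_assoc]
  · refine ⟨Rl ∪ Rr, hint hlint hrint, hsub hlsub hrsub, ?_, ?_⟩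
    · have := Finset.card_union_le Rl Rr
      omega
    · rw [condBenefit_union_siblings hT hl hlu hr hru hlr hlsub hrsub]
      exact (EReal.coe_add _ _).symm

theorem isGreatest_subtreeBenefits_of_isInternal (hT : IsRootedTree parent root)
    (hvars : ∀ u v : V, v ∈ ancSet parent u → vars u ⊆ vars v)
    (hbin : isBinary parent lc rc)
    (hu : isInternal parent u) (hκ : 1 ≤ κ) (hS : ∀ v ∈ S, v ∈ ancSet parent u)
    {fl fr gl gr : ℕ → EReal}
    (hfl : ∀ i, IsGreatest (subtreeBenefits parent vars Z Pr c (lc u) i S) (fl i))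
    (hfr : ∀ j, IsGreatest (subtreeBenefits parent vars Z Pr c (rc u) j S) (fr j))
    (hgl : ∀ i, IsGreatest (subtreeBenefits parent vars Z Pr c (lc u) i {u}) (gl i))
    (hgr : ∀ j, IsGreatest (subtreeBenefits parent vars Z Pr c (rc u) j {u}) (gr j)) :
    IsGreatest (subtreeBenefits parent vars Z Pr c u κ S)
      (max (((eInd parent vars Z Pr u S * util parent c u : ℝ) : EReal) +
          sSup {x | ∃ i j, i + j = κ - 1 ∧ x = gl i + gr j})
        (sSup {x | ∃ i j, i + j = κ ∧ x = fl i + fr j})) := by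
  rw [(subtreeBenefits_subset_splitSum hT hvars hbin hu hS).antisymm
    (splitSum_subset_subtreeBenefits hT hvars hbin hu hκ hS)]
  exact ((monotone_id.const_add _).map_isGreatest (isGreatest_splitSum hgl hgr _)).union
    (isGreatest_splitSum hfl hfr κ)

end SubtreeBenefits

theorem forall_mem_optSet {V : Type*} {p : V → Prop} {vo : Option V} :
    (∀ v ∈ optSet vo, p v) ↔ ∀ v ∈ vo, p v := by
  cases vo <;> simp [optSet]

theorem subtreeBenefits_root_empty {V α Q : Type*} [Fintype V] [Fintype Q] {parent : V → V}
    {root : V} (hT : IsRootedTree parent root) (vars : V → Set α) (Z : Q → Set α)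
    (Pr : Q → ℝ) (c : V → ℝ) (k : ℕ) :
    subtreeBenefits parent vars Z Pr c root k ∅ = {x | ∃ R : Finset V,
      (∀ u ∈ R, isInternal parent u) ∧ R.card ≤ k ∧
      x = ((benefit parent vars Z Pr c R : ℝ) : EReal)} := by
  have hall (R : Finset V) : ↑R ⊆ subtreeSet parent root := fun w _ => hT.reach w
  simp only [subtreeBenefits, condBenefit_empty_context, hall, true_and]

theorem dynamic_program_optimal_general {V α Q : Type*} [Fintype V] [Fintype Q]
    (root : V) (parent : V → V)
    (hroot : parent root = root)
    (hreach : ∀ u, ∃ n : ℕ, parent^[n] u = root)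
    (lc rc : V → V) (hbin : isBinary parent lc rc)
    (vars : V → Set α)
    (hvars : ∀ u v : V, v ∈ ancSet parent u → vars u ⊆ vars v)
    (Z : Q → Set α) (Pr : Q → ℝ)
    (c : V → ℝ)
    (k : ℕ)
    (A A0 A1 : V → ℕ → Option V → EReal)
    (hAzero : ∀ u : V, ∀ vo : Option V, (∀ v ∈ vo, v ∈ ancSet parent u) →
      A u 0 vo = 0)
    (hleaf : ∀ u : V, ¬ isInternal parent u → ∀ κ : ℕ, 1 ≤ κ →
      ∀ vo : Option V, (∀ v ∈ vo, v ∈ ancSet parent u) →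
        A0 u κ vo = 0 ∧ A1 u κ vo = ⊥)
    (hA1 : ∀ u : V, isInternal parent u → ∀ κ : ℕ, 1 ≤ κ →
      ∀ vo : Option V, (∀ v ∈ vo, v ∈ ancSet parent u) →
        A1 u κ vo =
          ((eInd parent vars Z Pr u (optSet vo) * util parent c u : ℝ) : EReal) +
          sSup {x : EReal | ∃ κl κr : ℕ, κl + κr = κ - 1 ∧
            x = A (lc u) κl (some u) + A (rc u) κr (some u)})
    (hA0 : ∀ u : V, isInternal parent u → ∀ κ : ℕ, 1 ≤ κ →
      ∀ vo : Option V, (∀ v ∈ vo, v ∈ ancSet parent u) →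
        A0 u κ vo = sSup {x : EReal | ∃ κl κr : ℕ, κl + κr = κ ∧
          x = A (lc u) κl vo + A (rc u) κr vo})
    (hAmax : ∀ u : V, ∀ κ : ℕ, 1 ≤ κ →
      ∀ vo : Option V, (∀ v ∈ vo, v ∈ ancSet parent u) →
        A u κ vo = max (A1 u κ vo) (A0 u κ vo)) :
    A root k none = sSup {x : EReal | ∃ R : Finset V,
      (∀ u ∈ R, isInternal parent u) ∧ R.card ≤ k ∧
      x = ((benefit parent vars Z Pr c R : ℝ) : EReal)} := by
  have hT : IsRootedTree parent root := ⟨hroot, hreach⟩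
  have hopt (u : V) : ∀ κ vo, (∀ v ∈ vo, v ∈ ancSet parent u) →
      IsGreatest (subtreeBenefits parent vars Z Pr c u κ (optSet vo)) (A u κ vo) := by
    induction u using hT.induction with
    | h u ih =>
    intro κ vo hvo
    rcases Nat.eq_zero_or_pos κ with rfl | hκ
    · rw [subtreeBenefits_zero, hAzero u vo hvo]
      exact isGreatest_singleton
    by_cases hu : isInternal parent u
    · obtain ⟨-, hl, hr, hlu, hru, -⟩ := hbin u hu
      have hvo_child {x : V} (hx : parent x = u) (hxu : x ≠ u) :
          ∀ v ∈ vo, v ∈ ancSet parent x :=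
        fun v hv => hT.ancSet_subset_ancSet_child hx hxu (hvo v hv)
      have hu_child {x : V} (hx : parent x = u) (hxu : x ≠ u) :
          ∀ v ∈ some u, v ∈ ancSet parent x := by
        simpa using hT.mem_ancSet_of_mem_subtreeSet_child hx hxu (mem_subtreeSet_self x)
      rw [hAmax u κ hκ vo hvo, hA1 u hu κ hκ vo hvo, hA0 u hu κ hκ vo hvo]
      exact isGreatest_subtreeBenefits_of_isInternal hT hvars hbin hu hκ
        (forall_mem_optSet.mpr hvo) (ih _ hl hlu · vo (hvo_child hl hlu))
        (ih _ hr hru · vo (hvo_child hr hru)) (ih _ hl hlu · (some u) (hu_child hl hlu))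
        (ih _ hr hru · (some u) (hu_child hr hru))
    · obtain ⟨hA0leaf, hA1leaf⟩ := hleaf u hu κ hκ vo hvo
      rw [subtreeBenefits_of_not_isInternal hu, hAmax u κ hκ vo hvo, hA0leaf, hA1leaf,
        max_eq_right bot_le]
      exact isGreatest_singleton
  rw [← subtreeBenefits_root_empty hT]
  exact (hopt root k none (by simp)).csSup_eq.symm

/-- Correctness of the dynamic program: on a binary elimination
tree, any tables `A, A⁰, A¹` over the extended reals satisfying the recurrences
`A(u,0,v) = 0`; for leaves and `κ ≥ 1`, `A⁰(u,κ,v) = 0`, `A¹(u,κ,v) = −∞`;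
for internal `u` and `κ ≥ 1`,
`A¹(u,κ,v) = E[I(u|{v})]·U(u) + max_{κℓ+κr=κ−1} (A(ℓ(u),κℓ,u) + A(r(u),κr,u))`,
`A⁰(u,κ,v) = max_{κℓ+κr=κ} (A(ℓ(u),κℓ,v) + A(r(u),κr,v))`, and
`A(u,κ,v) = max{A¹(u,κ,v), A⁰(u,κ,v)}` for `κ ≥ 1`, satisfy:
`A(r,k,ε)` is the maximum of `B(R)` over all leaf-free `R ⊆ V` with `|R| ≤ k`. -/
theorem dynamic_program_optimal {V α Q : Type*} [Fintype V] [DecidableEq V] [Fintype Q]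
    (root : V) (parent : V → V)
    (hroot : parent root = root)
    (hreach : ∀ u, ∃ n : ℕ, parent^[n] u = root)
    (lc rc : V → V) (hbin : isBinary parent lc rc)
    (vars : V → Set α)
    (hvars : ∀ u v : V, v ∈ ancSet parent u → vars u ⊆ vars v)
    (Z : Q → Set α) (Pr : Q → ℝ)
    (hPr0 : ∀ q, 0 ≤ Pr q) (hPr1 : ∑ q : Q, Pr q = 1)
    (c : V → ℝ) (hc : ∀ x, 0 ≤ c x)
    (k : ℕ) (hk : 0 < k)
    (A A0 A1 : V → ℕ → Option V → EReal)
    (hAzero : ∀ u : V, ∀ vo : Option V, (∀ v ∈ vo, v ∈ ancSet parent u) →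
      A u 0 vo = 0)
    (hleaf : ∀ u : V, ¬ isInternal parent u → ∀ κ : ℕ, 1 ≤ κ →
      ∀ vo : Option V, (∀ v ∈ vo, v ∈ ancSet parent u) →
        A0 u κ vo = 0 ∧ A1 u κ vo = ⊥)
    (hA1 : ∀ u : V, isInternal parent u → ∀ κ : ℕ, 1 ≤ κ →
      ∀ vo : Option V, (∀ v ∈ vo, v ∈ ancSet parent u) →
        A1 u κ vo =
          ((eInd parent vars Z Pr u (optSet vo) * util parent c u : ℝ) : EReal) +
          sSup {x : EReal | ∃ κl κr : ℕ, κl + κr = κ - 1 ∧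
            x = A (lc u) κl (some u) + A (rc u) κr (some u)})
    (hA0 : ∀ u : V, isInternal parent u → ∀ κ : ℕ, 1 ≤ κ →
      ∀ vo : Option V, (∀ v ∈ vo, v ∈ ancSet parent u) →
        A0 u κ vo = sSup {x : EReal | ∃ κl κr : ℕ, κl + κr = κ ∧
          x = A (lc u) κl vo + A (rc u) κr vo})
    (hAmax : ∀ u : V, ∀ κ : ℕ, 1 ≤ κ →
      ∀ vo : Option V, (∀ v ∈ vo, v ∈ ancSet parent u) →
        A u κ vo = max (A1 u κ vo) (A0 u κ vo)) :
    A root k none = sSup {x : EReal | ∃ R : Finset V,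
      (∀ u ∈ R, isInternal parent u) ∧ R.card ≤ k ∧
      x = ((benefit parent vars Z Pr c R : ℝ) : EReal)} :=
  dynamic_program_optimal_general root parent hroot hreach lc rc hbin vars hvars Z Pr c k A A0 A1
    hAzero hleaf hA1 hA0 hAmax
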